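/- Let L : (0,∞) → [−∞,∞] be a function with L(t) < ∞ for some t > 0. Define x_∞ := sup{x ∈ ℝ : L^*(x) < ∞} (with sup ∅ := −∞), u_{−∞} := lim_{x→−∞} L^*(x), and u_∞ := lim_{x ↑ x_∞} L^*(x) if x_∞ > −∞, u_∞ := ∞ if x_∞ = −∞. Then the functions L^{*←} and L^{*⇐} are nondecreasing on ℝ and strictly increasing on the (possibly empty) interval (u_{−∞}, u_∞): for all u, v with u_{−∞} < u < v < u_∞ one has L^{*←}(u) < L^{*←}(v) and L^{*⇐}(u) < L^{*⇐}(v). -/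

import Mathlib

open Set MeasureTheory Filter

/-- Legendre–Fenchel transform `L^*(x) = sup_{t>0} [t·x − L(t)]`, with values in `[-∞,∞]`. -/
noncomputable def LF (L : ℝ → EReal) (x : ℝ) : EReal :=
  ⨆ (t : ℝ) (_ : 0 < t), ((t * x : ℝ) : EReal) - L t

/-- Smallest generalized inverse `L^{*←}(u) = inf {x ∈ ℝ : L^*(x) ≥ u}`, with `inf ∅ = ∞`. -/
noncomputable def geInv (L : ℝ → EReal) (u : ℝ) : EReal :=
  sInf ((fun x : ℝ => (x : EReal)) '' {x : ℝ | (u : EReal) ≤ LF L x})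

/-- Largest generalized inverse `L^{*⇐}(u) = inf {x ∈ ℝ : L^*(x) > u}`, with `inf ∅ = ∞`. -/
noncomputable def tgeInv (L : ℝ → EReal) (u : ℝ) : EReal :=
  sInf ((fun x : ℝ => (x : EReal)) '' {x : ℝ | (u : EReal) < LF L x})

/-- Hölder convolution `(L_1 ⊞ ⋯ ⊞ L_n)(t) = inf { Σ_j α_j L_j(t/α_j) : α_j > 0, Σ_j α_j = 1 }`,
with `inf ∅ = ∞`. -/
noncomputable def hconv (n : ℕ) (L : Fin n → ℝ → EReal) (t : ℝ) : EReal :=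
  ⨅ (α : Fin n → ℝ) (_ : (∀ j, 0 < α j) ∧ ∑ j, α j = 1),
    ∑ j, (α j : EReal) * L j (t / α j)

/-- Cramér–Chernoff function `L_X(t) = ln E e^{tX}`, with values in `(-∞,∞]`. -/
noncomputable def cramer {Ω : Type*} [MeasurableSpace Ω] (μ : Measure Ω) (X : Ω → ℝ)
    (t : ℝ) : EReal :=
  ENNReal.log (∫⁻ ω, ENNReal.ofReal (Real.exp (t * X ω)) ∂μ)

/-!
`L^*` is nondecreasing, so both generalized inverses are nondecreasing, and since
`L^{*←} ≤ L^{*⇐}`, strictness of both reduces to `L^{*⇐}(u) < L^{*←}(v)` for `u < v`. If this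
failed, `x₀ := L^{*←}(v)` would be a point with `L^* ≤ u` to its left and `L^* ≥ v` to its right.
For `u` and `v` in `(u_{-∞}, u_∞)`, `x₀` is real and lies strictly inside the domain of `L^*`, and
the convex function `L^*` cannot jump at an interior point of its domain.
-/

open Topology

section LegendreFenchel

variable {L : ℝ → EReal}

lemma sub_le_LF (L : ℝ → EReal) (x : ℝ) {t : ℝ} (ht : 0 < t) :
    ((t * x : ℝ) : EReal) - L t ≤ LF L x :=
  le_iSup₂ (f := fun t (_ : 0 < t) => ((t * x : ℝ) : EReal) - L t) t ht

lemma LF_mono (L : ℝ → EReal) : Monotone (LF L) := fun x y hxy =>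
  iSup₂_le fun t ht => (EReal.sub_le_sub (by gcongr) le_rfl).trans (sub_le_LF L y ht)

lemma LF_convex_comb_le {x y a b θ : ℝ} (hθ₀ : 0 ≤ θ) (hθ₁ : θ ≤ 1)
    (hx : LF L x ≤ (a : EReal)) (hy : LF L y ≤ (b : EReal)) :
    LF L (θ * x + (1 - θ) * y) ≤ ((θ * a + (1 - θ) * b : ℝ) : EReal) := by
  refine iSup₂_le fun t ht => ?_
  have hxt := (sub_le_LF L x ht).trans hx
  have hyt := (sub_le_LF L y ht).trans hy
  generalize L t = c at hxt hyt ⊢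
  induction c using EReal.rec with
  | bot =>
    rw [EReal.coe_sub_bot, top_le_iff] at hxt
    exact absurd hxt (EReal.coe_ne_top a)
  | top => simp
  | coe c =>
    norm_cast at hxt hyt ⊢
    nlinarith [mul_le_mul_of_nonneg_left hxt hθ₀,
      mul_le_mul_of_nonneg_left hyt (sub_nonneg.mpr hθ₁)]

lemma le_of_LF_le_left_of_le_LF_right {u v x₀ x₁ : ℝ} (hx₀₁ : x₀ < x₁) (hx₁ : LF L x₁ ≠ ⊤)
    (hleft : ∀ x < x₀, LF L x ≤ (u : EReal)) (hright : ∀ x, x₀ < x → (v : EReal) ≤ LF L x) :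
    v ≤ u := by
  set c := (LF L x₁).toReal
  have hc : LF L x₁ ≤ (c : EReal) := EReal.le_coe_toReal hx₁
  -- chords from `x₂ < x₀` to `x₁` passing just right of `x₀`, with `x₂ → x₀` as `θ → 1`
  have hchord : ∀ θ ∈ Ioo (0 : ℝ) 1, v ≤ θ * u + (1 - θ) * c := by
    rintro θ ⟨hθ₀, hθ₁⟩
    set x₂ := x₀ - (1 - θ) * (x₁ - x₀) / (2 * θ)
    have hx₂ : x₂ < x₀ := sub_lt_self _ (by have := sub_pos.mpr hθ₁; positivity)
    have hcomb : θ * x₂ + (1 - θ) * x₁ = x₀ + (1 - θ) * (x₁ - x₀) / 2 := by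
      simp only [x₂]; field_simp; ring
    have hright' := hright (θ * x₂ + (1 - θ) * x₁)
      (by rw [hcomb]; linarith [mul_pos (sub_pos.mpr hθ₁) (sub_pos.mpr hx₀₁)])
    exact_mod_cast hright'.trans
      (LF_convex_comb_le hθ₀.le hθ₁.le (hleft x₂ hx₂) hc)
  have hlim : Tendsto (fun θ : ℝ => θ * u + (1 - θ) * c) (𝓝[<] 1) (𝓝 u) := by
    have : Continuous fun θ : ℝ => θ * u + (1 - θ) * c := by fun_prop
    simpa using (this.tendsto 1).mono_left nhdsWithin_le_nhds
  exact ge_of_tendsto hlim (eventually_of_mem (Ioo_mem_nhdsLT zero_lt_one) hchord)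

end LegendreFenchel

section GeneralizedInverse

variable {L : ℝ → EReal} {u v x : ℝ}

lemma geInv_mono (L : ℝ → EReal) : Monotone (geInv L) := fun _ _ huv =>
  sInf_le_sInf <| image_mono fun _ hx => (EReal.coe_le_coe_iff.mpr huv).trans hx

lemma tgeInv_mono (L : ℝ → EReal) : Monotone (tgeInv L) := fun _ _ huv =>
  sInf_le_sInf <| image_mono fun _ hx => (EReal.coe_le_coe_iff.mpr huv).trans_lt hx

lemma geInv_le_tgeInv : geInv L u ≤ tgeInv L u :=
  sInf_le_sInf <| image_mono <| ofPred_subset_ofPred.mpr fun _ => le_of_lt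

lemma geInv_le (h : (v : EReal) ≤ LF L x) : geInv L v ≤ x :=
  sInf_le (mem_image_of_mem _ h)

lemma tgeInv_le (h : (u : EReal) < LF L x) : tgeInv L u ≤ x :=
  sInf_le (mem_image_of_mem _ h)

lemma le_geInv (h : LF L x < v) : (x : EReal) ≤ geInv L v := by
  refine le_sInf ?_
  rintro _ ⟨z, hz, rfl⟩
  by_contra! hzx
  exact (h.trans_le hz).not_ge (LF_mono L (EReal.coe_lt_coe_iff.mp hzx).le)

lemma le_LF_of_geInv_lt (h : geInv L v < x) : (v : EReal) ≤ LF L x := by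
  obtain ⟨_, ⟨z, hz, rfl⟩, hzx⟩ := sInf_lt_iff.mp h
  exact hz.trans (LF_mono L (EReal.coe_lt_coe_iff.mp hzx).le)

lemma tgeInv_lt_geInv {x₂ y : ℝ} (huv : u < v) (hx₂ : LF L x₂ < u) (hy : geInv L v < y)
    (hfin : LF L y ≠ ⊤) : tgeInv L u < geInv L v := by
  by_contra! hle
  have hbot : (x₂ : EReal) ≤ geInv L v := le_geInv (hx₂.trans (EReal.coe_lt_coe_iff.mpr huv))
  obtain ⟨x₀, hx₀⟩ : ∃ x₀ : ℝ, geInv L v = x₀ :=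
    ⟨_, (EReal.coe_toReal (hy.trans (EReal.coe_lt_top y)).ne
      (ne_bot_of_le_ne_bot (EReal.coe_ne_bot x₂) hbot)).symm⟩
  rw [hx₀] at hle hy
  refine huv.not_ge (le_of_LF_le_left_of_le_LF_right (EReal.coe_lt_coe_iff.mp hy) hfin ?_ ?_)
  · intro x hx
    by_contra! h
    exact hx.not_ge (EReal.coe_le_coe_iff.mp (hle.trans (tgeInv_le h)))
  · intro x hx
    exact le_LF_of_geInv_lt (hx₀ ▸ EReal.coe_lt_coe_iff.mpr hx)

end GeneralizedInverse

/-- The limits of the monotone function `L^*` defining `u_{-∞}` and `u_∞` are written as an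
infimum and a supremum. -/
theorem geInv_monotone_strictMono_general (L : ℝ → EReal)
    (xinf uminf uinf : EReal)
    (hx : xinf = sSup ((fun x : ℝ => (x : EReal)) '' {x : ℝ | LF L x < ⊤}))
    (hm : uminf = ⨅ x : ℝ, LF L x)
    (hi : uinf = if xinf = ⊥ then ⊤ else ⨆ (x : ℝ) (_ : (x : EReal) < xinf), LF L x) :
    Monotone (geInv L) ∧ Monotone (tgeInv L) ∧
      ∀ u v : ℝ, uminf < (u : EReal) → u < v → (v : EReal) < uinf →
        geInv L u < geInv L v ∧ tgeInv L u < tgeInv L v := by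
  refine ⟨geInv_mono L, tgeInv_mono L, fun u v hu huv hv => ?_⟩
  obtain ⟨x₂, hx₂⟩ : ∃ x₂, LF L x₂ < u := iInf_lt_iff.mp (hm ▸ hu)
  have hxinf : xinf ≠ ⊥ := ne_bot_of_le_ne_bot (EReal.coe_ne_bot x₂) <|
    hx ▸ le_sSup (mem_image_of_mem _ (hx₂.trans (EReal.coe_lt_top u)))
  rw [hi, if_neg hxinf] at hv
  obtain ⟨a, ha⟩ := lt_iSup_iff.mp hv
  obtain ⟨haxinf, hva⟩ := lt_iSup_iff.mp ha
  obtain ⟨_, ⟨y, hy, rfl⟩, hay⟩ := lt_sSup_iff.mp (hx ▸ haxinf)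
  have key := tgeInv_lt_geInv huv hx₂ ((geInv_le hva.le).trans_lt hay) hy.ne
  exact ⟨geInv_le_tgeInv.trans_lt key, key.trans_le geInv_le_tgeInv⟩

/-- Proposition gen (f). The generalized inverses are nondecreasing on
`ℝ` and strictly increasing on the (possibly empty) interval `(u_{-∞}, u_∞)`, where
`u_{-∞} = lim_{x→-∞} L^*(x)` and `u_∞ = lim_{x↑x_∞} L^*(x)` (`u_∞ := ∞` if
`x_∞ = sup dom L^* = -∞`); the limits of the monotone function `L^*` are expressed as
infimum/supremum. -/
theorem geInv_monotone_strictMono (L : ℝ → EReal)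
    (hfin : ∃ t : ℝ, 0 < t ∧ L t ≠ ⊤)
    (xinf uminf uinf : EReal)
    (hx : xinf = sSup ((fun x : ℝ => (x : EReal)) '' {x : ℝ | LF L x < ⊤}))
    (hm : uminf = ⨅ x : ℝ, LF L x)
    (hi : uinf = if xinf = ⊥ then ⊤ else ⨆ (x : ℝ) (_ : (x : EReal) < xinf), LF L x) :
    Monotone (geInv L) ∧ Monotone (tgeInv L) ∧
      ∀ u v : ℝ, uminf < (u : EReal) → u < v → (v : EReal) < uinf →
        geInv L u < geInv L v ∧ tgeInv L u < tgeInv L v :=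
  geInv_monotone_strictMono_general L xinf uminf uinf hx hm hi
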